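/- arXiv:2411.12384 — 4 statements merged into one kernel-verified Lean document; each statement's English description precedes it below -/
import Mathlib

section
/- Let B, R > 0 and ℓ > 2R. The point (x₁*, x₂*) = (0, −i·√(ℓ²/4 − R²)) belongs to D = {(x₁,x₂) ∈ ℂ² : Re x₁ ∈ (−ℓ/2, ℓ/2), Im x₂ ≤ 0}, both complex partial derivatives of s₀ vanish at (x₁*, x₂*), and (x₁*, x₂*) is the unique point of D at which both partial derivatives of s₀ vanish. -/
/-- The phase function `s₀` of the paper, with parameters `B`, `R`, `ℓ`,
using the principal branch `Complex.log` of the complex logarithm. -/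
noncomputable def s0 (B R ℓ : ℝ) (x₁ x₂ : ℂ) : ℂ :=
  ((B : ℂ) / 4) * (x₁ + (ℓ : ℂ) / 2) ^ 2 + ((B : ℂ) / 4) * (x₁ - (ℓ : ℂ) / 2) ^ 2
    + ((B : ℂ) / 2) * x₂ ^ 2 - (B : ℂ) * (R : ℂ) ^ 2 / 2
    + Complex.I * ((B : ℂ) * (ℓ : ℂ) / 2) * x₂
    - ((B : ℂ) * (R : ℂ) ^ 2 / 2) * Complex.log (((ℓ : ℂ) / 2 + x₁ + Complex.I * x₂) / (R : ℂ))
    - ((B : ℂ) * (R : ℂ) ^ 2 / 2) * Complex.log (((ℓ : ℂ) / 2 - x₁ + Complex.I * x₂) / (R : ℂ))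

open Complex

lemma re_aux1 (ℓ : ℝ) (x₁ x₂ : ℂ) : ((ℓ:ℂ)/2 + x₁ + Complex.I*x₂).re = ℓ/2 + x₁.re - x₂.im := by
  simp [Complex.add_re, Complex.mul_re]; ring

lemma re_aux2 (ℓ : ℝ) (x₁ x₂ : ℂ) : ((ℓ:ℂ)/2 - x₁ + Complex.I*x₂).re = ℓ/2 - x₁.re - x₂.im := by
  simp [Complex.add_re, Complex.sub_re, Complex.mul_re]; ring

lemma hasDerivAt_log_div {f : ℂ → ℂ} {f' z : ℂ} (R : ℝ) (hR : 0 < R)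
    (hf : HasDerivAt f f' z) (h : 0 < (f z).re) :
    HasDerivAt (fun w => Complex.log (f w / (R : ℂ))) (f' * (f z)⁻¹) z := by
  have hmem : f z / (R : ℂ) ∈ Complex.slitPlane := by
    rw [Complex.mem_slitPlane_iff]
    left
    rw [Complex.div_ofReal_re]
    positivity
  have hc : HasDerivAt (fun w => f w / (R : ℂ)) (f' / (R : ℂ)) z := hf.div_const _
  have := (Complex.hasDerivAt_log hmem).comp z hc
  refine this.congr_deriv ?_
  have hR0 : (R : ℂ) ≠ 0 := by exact_mod_cast hR.ne'
  have hf0 : f z ≠ 0 := by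
    intro h0; rw [h0] at h; simp at h
  field_simp

lemma hasDerivAt_s0_fst (B R ℓ : ℝ) (hR : 0 < R) (x₁ x₂ : ℂ)
    (ha : 0 < ((ℓ:ℂ)/2 + x₁ + Complex.I*x₂).re) (hb : 0 < ((ℓ:ℂ)/2 - x₁ + Complex.I*x₂).re) :
    HasDerivAt (fun z : ℂ => s0 B R ℓ z x₂)
      ((B:ℂ) * x₁ - ((B:ℂ)*(R:ℂ)^2/2) * ((ℓ:ℂ)/2 + x₁ + Complex.I*x₂)⁻¹
        + ((B:ℂ)*(R:ℂ)^2/2) * ((ℓ:ℂ)/2 - x₁ + Complex.I*x₂)⁻¹) x₁ := by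
  unfold s0
  have h1 : HasDerivAt (fun z : ℂ => ((B:ℂ)/4) * (z + (ℓ:ℂ)/2)^2)
      (((B:ℂ)/4) * ((2:ℕ) * (x₁ + (ℓ:ℂ)/2) ^ 1 * 1)) x₁ :=
    (((hasDerivAt_id x₁).add_const _).pow 2).const_mul _
  have h2 : HasDerivAt (fun z : ℂ => ((B:ℂ)/4) * (z - (ℓ:ℂ)/2)^2)
      (((B:ℂ)/4) * ((2:ℕ) * (x₁ - (ℓ:ℂ)/2) ^ 1 * 1)) x₁ :=
    (((hasDerivAt_id x₁).sub_const _).pow 2).const_mul _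
  have hfa : HasDerivAt (fun z : ℂ => (ℓ:ℂ)/2 + z + Complex.I*x₂) 1 x₁ :=
    ((hasDerivAt_id x₁).const_add _).add_const _
  have hfb : HasDerivAt (fun z : ℂ => (ℓ:ℂ)/2 - z + Complex.I*x₂) (-1) x₁ :=
    ((hasDerivAt_id x₁).const_sub _).add_const _
  have hl1 := (hasDerivAt_log_div R hR hfa ha).const_mul ((B:ℂ)*(R:ℂ)^2/2)
  have hl2 := (hasDerivAt_log_div R hR hfb hb).const_mul ((B:ℂ)*(R:ℂ)^2/2)
  have H := (((((h1.add h2).add (hasDerivAt_const x₁ (((B:ℂ)/2) * x₂ ^ 2))).sub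
      (hasDerivAt_const x₁ ((B:ℂ) * (R:ℂ)^2 / 2))).add
      (hasDerivAt_const x₁ (Complex.I * ((B:ℂ) * (ℓ:ℂ) / 2) * x₂))).sub hl1).sub hl2
  refine H.congr_deriv ?_
  push_cast
  ring

lemma hasDerivAt_s0_snd (B R ℓ : ℝ) (hR : 0 < R) (x₁ x₂ : ℂ)
    (ha : 0 < ((ℓ:ℂ)/2 + x₁ + Complex.I*x₂).re) (hb : 0 < ((ℓ:ℂ)/2 - x₁ + Complex.I*x₂).re) :
    HasDerivAt (fun w : ℂ => s0 B R ℓ x₁ w)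
      ((B:ℂ) * x₂ + Complex.I * ((B:ℂ)*(ℓ:ℂ)/2)
        - ((B:ℂ)*(R:ℂ)^2/2) * (Complex.I * ((ℓ:ℂ)/2 + x₁ + Complex.I*x₂)⁻¹)
        - ((B:ℂ)*(R:ℂ)^2/2) * (Complex.I * ((ℓ:ℂ)/2 - x₁ + Complex.I*x₂)⁻¹)) x₂ := by
  unfold s0
  have h3 : HasDerivAt (fun w : ℂ => ((B:ℂ)/2) * w^2)
      (((B:ℂ)/2) * ((2:ℕ) * x₂ ^ 1 * 1)) x₂ :=
    ((hasDerivAt_id x₂).pow 2).const_mul _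
  have h5 : HasDerivAt (fun w : ℂ => Complex.I * ((B:ℂ) * (ℓ:ℂ) / 2) * w)
      (Complex.I * ((B:ℂ) * (ℓ:ℂ) / 2) * 1) x₂ :=
    (hasDerivAt_id x₂).const_mul _
  have hfa : HasDerivAt (fun w : ℂ => (ℓ:ℂ)/2 + x₁ + Complex.I*w) Complex.I x₂ := by
    simpa using (((hasDerivAt_id x₂).const_mul Complex.I).const_add ((ℓ:ℂ)/2 + x₁))
  have hfb : HasDerivAt (fun w : ℂ => (ℓ:ℂ)/2 - x₁ + Complex.I*w) Complex.I x₂ := by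
    simpa using (((hasDerivAt_id x₂).const_mul Complex.I).const_add ((ℓ:ℂ)/2 - x₁))
  have hl1 := (hasDerivAt_log_div R hR hfa ha).const_mul ((B:ℂ)*(R:ℂ)^2/2)
  have hl2 := (hasDerivAt_log_div R hR hfb hb).const_mul ((B:ℂ)*(R:ℂ)^2/2)
  have H := ((((((hasDerivAt_const x₂ (((B:ℂ)/4) * (x₁ + (ℓ:ℂ)/2)^2)).add
      (hasDerivAt_const x₂ (((B:ℂ)/4) * (x₁ - (ℓ:ℂ)/2)^2))).add h3).sub
      (hasDerivAt_const x₂ ((B:ℂ) * (R:ℂ)^2 / 2))).add h5).sub hl1).sub hl2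
  refine H.congr_deriv ?_
  push_cast
  ring

/-- the point `(0, −i√(ℓ²/4 − R²))` belongs to `D`, both complex partial
derivatives of `s₀` vanish there, and it is the unique critical point of `s₀` in `D`. -/
theorem s0_unique_critical_point (B R ℓ : ℝ) (hB : 0 < B) (hR : 0 < R) (hℓ : 2 * R < ℓ) :
    ((0 : ℂ).re ∈ Set.Ioo (-(ℓ / 2)) (ℓ / 2) ∧
      (-(Complex.I * (Real.sqrt (ℓ ^ 2 / 4 - R ^ 2) : ℂ))).im ≤ 0) ∧
    deriv (fun z : ℂ => s0 B R ℓ z (-(Complex.I * (Real.sqrt (ℓ ^ 2 / 4 - R ^ 2) : ℂ)))) 0 = 0 ∧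
    deriv (fun w : ℂ => s0 B R ℓ 0 w) (-(Complex.I * (Real.sqrt (ℓ ^ 2 / 4 - R ^ 2) : ℂ))) = 0 ∧
    ∀ x₁ x₂ : ℂ, x₁.re ∈ Set.Ioo (-(ℓ / 2)) (ℓ / 2) → x₂.im ≤ 0 →
      deriv (fun z : ℂ => s0 B R ℓ z x₂) x₁ = 0 →
      deriv (fun w : ℂ => s0 B R ℓ x₁ w) x₂ = 0 →
      x₁ = 0 ∧ x₂ = -(Complex.I * (Real.sqrt (ℓ ^ 2 / 4 - R ^ 2) : ℂ)) := by
  have hl0 : 0 < ℓ := by linarith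
  have hnn : (0:ℝ) ≤ ℓ ^ 2 / 4 - R ^ 2 := by nlinarith
  set c : ℝ := Real.sqrt (ℓ ^ 2 / 4 - R ^ 2) with hc_def
  have hc2 : c ^ 2 = ℓ ^ 2 / 4 - R ^ 2 := Real.sq_sqrt hnn
  have hcpos : 0 < c := Real.sqrt_pos.mpr (by nlinarith)
  have hc2c : (c:ℂ) ^ 2 = (ℓ:ℂ) ^ 2 / 4 - (R:ℂ) ^ 2 := by
    rw [← Complex.ofReal_pow, hc2]; push_cast; ring
  have haS : 0 < ((ℓ:ℂ)/2 + 0 + Complex.I*(-(Complex.I*(c:ℂ)))).re := by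
    rw [re_aux1]; simp; linarith
  have hbS : 0 < ((ℓ:ℂ)/2 - 0 + Complex.I*(-(Complex.I*(c:ℂ)))).re := by
    rw [re_aux2]; simp; linarith
  have ha0S : ((ℓ:ℂ)/2 + 0 + Complex.I*(-(Complex.I*(c:ℂ)))) ≠ 0 := by
    intro h0; rw [h0] at haS; simp at haS
  have hbeqa : ((ℓ:ℂ)/2 - 0 + Complex.I*(-(Complex.I*(c:ℂ))))
      = ((ℓ:ℂ)/2 + 0 + Complex.I*(-(Complex.I*(c:ℂ)))) := by ring
  refine ⟨⟨?_, ?_⟩, ?_, ?_, ?_⟩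
  · simp only [Complex.zero_re, Set.mem_Ioo]
    constructor <;> linarith
  · simp; linarith
  · rw [(hasDerivAt_s0_fst B R ℓ hR 0 (-(Complex.I*(c:ℂ))) haS hbS).deriv, hbeqa]
    ring
  · rw [(hasDerivAt_s0_snd B R ℓ hR 0 (-(Complex.I*(c:ℂ))) haS hbS).deriv, hbeqa]
    have key : ((B:ℂ) * (-(Complex.I*(c:ℂ))) + Complex.I * ((B:ℂ)*(ℓ:ℂ)/2)
        - ((B:ℂ)*(R:ℂ)^2/2) * (Complex.I * ((ℓ:ℂ)/2 + 0 + Complex.I*(-(Complex.I*(c:ℂ))))⁻¹)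
        - ((B:ℂ)*(R:ℂ)^2/2) * (Complex.I * ((ℓ:ℂ)/2 + 0 + Complex.I*(-(Complex.I*(c:ℂ))))⁻¹))
        * ((ℓ:ℂ)/2 + 0 + Complex.I*(-(Complex.I*(c:ℂ)))) = 0 := by
      linear_combination (-(B:ℂ)*(R:ℂ)^2*Complex.I) * (mul_inv_cancel₀ ha0S)
        + (-(Complex.I)*(B:ℂ)) * hc2c
        + (Complex.I*(B:ℂ)*(c:ℂ)^2 - Complex.I*(B:ℂ)*(ℓ:ℂ)*(c:ℂ)/2) * Complex.I_sq
    rcases mul_eq_zero.mp key with h | h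
    · exact h
    · exact absurd h ha0S
  · intro x₁ x₂ hx1 hx2 h1 h2
    obtain ⟨hx1l, hx1r⟩ := hx1
    have ha : 0 < ((ℓ:ℂ)/2 + x₁ + Complex.I*x₂).re := by rw [re_aux1]; linarith
    have hb : 0 < ((ℓ:ℂ)/2 - x₁ + Complex.I*x₂).re := by rw [re_aux2]; linarith
    have ha0 : ((ℓ:ℂ)/2 + x₁ + Complex.I*x₂) ≠ 0 := by
      intro h0; rw [h0] at ha; simp at ha
    have hb0 : ((ℓ:ℂ)/2 - x₁ + Complex.I*x₂) ≠ 0 := by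
      intro h0; rw [h0] at hb; simp at hb
    rw [(hasDerivAt_s0_fst B R ℓ hR x₁ x₂ ha hb).deriv] at h1
    rw [(hasDerivAt_s0_snd B R ℓ hR x₁ x₂ ha hb).deriv] at h2
    have hB0 : (B:ℂ) ≠ 0 := by exact_mod_cast hB.ne'
    have e1B : (B:ℂ) * (x₁ * (((ℓ:ℂ)/2 + x₁ + Complex.I*x₂) * ((ℓ:ℂ)/2 - x₁ + Complex.I*x₂) + (R:ℂ)^2)) = 0 := by
      linear_combination (((ℓ:ℂ)/2 + x₁ + Complex.I*x₂) * ((ℓ:ℂ)/2 - x₁ + Complex.I*x₂)) * h1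
        + ((B:ℂ)*(R:ℂ)^2/2 * ((ℓ:ℂ)/2 - x₁ + Complex.I*x₂)) * (mul_inv_cancel₀ ha0)
        - ((B:ℂ)*(R:ℂ)^2/2 * ((ℓ:ℂ)/2 + x₁ + Complex.I*x₂)) * (mul_inv_cancel₀ hb0)
    have e1 : x₁ * (((ℓ:ℂ)/2 + x₁ + Complex.I*x₂) * ((ℓ:ℂ)/2 - x₁ + Complex.I*x₂) + (R:ℂ)^2) = 0 :=
      (mul_eq_zero.mp e1B).resolve_left hB0
    have e2 : 2*(x₂ + Complex.I*(ℓ:ℂ)/2) * (((ℓ:ℂ)/2 + x₁ + Complex.I*x₂) * ((ℓ:ℂ)/2 - x₁ + Complex.I*x₂))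
        = Complex.I*(R:ℂ)^2*(((ℓ:ℂ)/2 + x₁ + Complex.I*x₂) + ((ℓ:ℂ)/2 - x₁ + Complex.I*x₂)) := by
      have e2B : (B:ℂ) * (2*(x₂ + Complex.I*(ℓ:ℂ)/2) * (((ℓ:ℂ)/2 + x₁ + Complex.I*x₂) * ((ℓ:ℂ)/2 - x₁ + Complex.I*x₂))
          - Complex.I*(R:ℂ)^2*(((ℓ:ℂ)/2 + x₁ + Complex.I*x₂) + ((ℓ:ℂ)/2 - x₁ + Complex.I*x₂))) = 0 := by
        linear_combination (2*((ℓ:ℂ)/2 + x₁ + Complex.I*x₂) * ((ℓ:ℂ)/2 - x₁ + Complex.I*x₂)) * h2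
          + ((B:ℂ)*Complex.I*(R:ℂ)^2*((ℓ:ℂ)/2 - x₁ + Complex.I*x₂)) * (mul_inv_cancel₀ ha0)
          + ((B:ℂ)*Complex.I*(R:ℂ)^2*((ℓ:ℂ)/2 + x₁ + Complex.I*x₂)) * (mul_inv_cancel₀ hb0)
      have := (mul_eq_zero.mp e2B).resolve_left hB0
      linear_combination this
    rcases mul_eq_zero.mp e1 with hx0 | hab
    · subst hx0
      have e3 : ((x₂ + Complex.I*(ℓ:ℂ)/2) * ((ℓ:ℂ)/2 + 0 + Complex.I*x₂) - Complex.I*(R:ℂ)^2)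
          * ((ℓ:ℂ)/2 + 0 + Complex.I*x₂) = 0 := by
        linear_combination (1/2 : ℂ) * e2
      rcases mul_eq_zero.mp e3 with e4 | h0
      swap
      · exact absurd h0 ha0
      have e5 : x₂^2 + (c:ℂ)^2 = 0 := by
        linear_combination (-Complex.I) * e4 + hc2c
          + (x₂^2 + (ℓ:ℂ)^2/4 - (R:ℂ)^2 + Complex.I*(ℓ:ℂ)*x₂/2) * Complex.I_sq
      have e6 : (x₂ - (-(Complex.I*(c:ℂ)))) * (x₂ + (-(Complex.I*(c:ℂ)))) = 0 := by
        linear_combination e5 - (c:ℂ)^2 * Complex.I_sq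
      rcases mul_eq_zero.mp e6 with h | h
      · exact ⟨rfl, sub_eq_zero.mp h⟩
      · exfalso
        have hx2e : x₂ = Complex.I*(c:ℂ) := by linear_combination h
        rw [hx2e] at hx2
        simp at hx2
        linarith
    · exfalso
      have hl : (2*Complex.I*(R:ℂ)^2) * (ℓ:ℂ) = 0 := by
        linear_combination (-1 : ℂ) * e2 + (2*(x₂+Complex.I*(ℓ:ℂ)/2)) * hab
          + (-2*(R:ℂ)^2*x₂) * Complex.I_sq
      have hne : (2*Complex.I*(R:ℂ)^2) * (ℓ:ℂ) ≠ 0 := by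
        apply mul_ne_zero
        · apply mul_ne_zero (mul_ne_zero two_ne_zero Complex.I_ne_zero)
          exact pow_ne_zero _ (by exact_mod_cast hR.ne')
        · exact_mod_cast hl0.ne'
      exact hne hl
end

section
/- Let B, R > 0 and ℓ > 2R, and set x₂* = −i·√(ℓ²/4 − R²). Then the critical value of the phase is s₀(0, x₂*) = (Bℓ/4)·√(ℓ² − 4R²) − BR²·ln((ℓ + √(ℓ² − 4R²))/(2R)). -/
open Complex

theorem s0_zero_left (B R ℓ : ℝ) (x₂ : ℂ) :
    s0 B R ℓ 0 x₂ = B * ℓ ^ 2 / 8 + B / 2 * x₂ ^ 2 - B * R ^ 2 / 2 + I * (B * ℓ / 2) * x₂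
      - B * R ^ 2 * log ((ℓ / 2 + I * x₂) / R) := by
  simp only [s0, zero_add, zero_sub, add_zero, sub_zero]
  ring

theorem s0_zero_neg_I_mul_ofReal (B R ℓ t : ℝ) (h : 0 ≤ (ℓ / 2 + t) / R) :
    s0 B R ℓ 0 (-(I * t)) = ((B * ℓ ^ 2 / 8 - B * t ^ 2 / 2 - B * R ^ 2 / 2 + B * ℓ * t / 2
      - B * R ^ 2 * Real.log ((ℓ / 2 + t) / R) : ℝ) : ℂ) := by
  have harg : ((ℓ : ℂ) / 2 + I * -(I * t)) / R = ((ℓ / 2 + t) / R : ℝ) := by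
    push_cast
    linear_combination (-(t : ℂ) / R) * I_sq
  rw [s0_zero_left, harg, ← ofReal_log h]
  push_cast
  linear_combination ((B : ℂ) / 2 * t ^ 2 - B * ℓ / 2 * t) * I_sq

theorem s0_critical_value_general (B R ℓ : ℝ) (hR : 0 < R) (hℓ : 2 * R < ℓ) :
    s0 B R ℓ 0 (-(Complex.I * (Real.sqrt (ℓ ^ 2 / 4 - R ^ 2) : ℂ)))
      = ((B * ℓ / 4 * Real.sqrt (ℓ ^ 2 - 4 * R ^ 2)
          - B * R ^ 2 * Real.log ((ℓ + Real.sqrt (ℓ ^ 2 - 4 * R ^ 2)) / (2 * R)) : ℝ) : ℂ) := by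
  set t := Real.sqrt (ℓ ^ 2 / 4 - R ^ 2)
  have ht_sq : t ^ 2 = ℓ ^ 2 / 4 - R ^ 2 := Real.sq_sqrt (by nlinarith)
  have ht : Real.sqrt (ℓ ^ 2 - 4 * R ^ 2) = 2 * t := by
    rw [show ℓ ^ 2 - 4 * R ^ 2 = 2 ^ 2 * (ℓ ^ 2 / 4 - R ^ 2) by ring,
      Real.sqrt_mul (by norm_num), Real.sqrt_sq (by norm_num)]
  have harg : (ℓ + 2 * t) / (2 * R) = (ℓ / 2 + t) / R := by
    field_simp
  have harg_nonneg : 0 ≤ (ℓ / 2 + t) / R :=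
    div_nonneg (by linarith [Real.sqrt_nonneg (ℓ ^ 2 / 4 - R ^ 2)]) hR.le
  rw [s0_zero_neg_I_mul_ofReal B R ℓ t harg_nonneg, ht, harg]
  congr 1
  linear_combination (-B / 2) * ht_sq

/-- the critical value of the phase is
`s₀(0, x₂*) = (Bℓ/4)·√(ℓ² − 4R²) − BR²·ln((ℓ + √(ℓ² − 4R²))/(2R))`. -/
theorem s0_critical_value (B R ℓ : ℝ) (hB : 0 < B) (hR : 0 < R) (hℓ : 2 * R < ℓ) :
    s0 B R ℓ 0 (-(Complex.I * (Real.sqrt (ℓ ^ 2 / 4 - R ^ 2) : ℂ)))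
      = ((B * ℓ / 4 * Real.sqrt (ℓ ^ 2 - 4 * R ^ 2)
          - B * R ^ 2 * Real.log ((ℓ + Real.sqrt (ℓ ^ 2 - 4 * R ^ 2)) / (2 * R)) : ℝ) : ℂ) :=
  s0_critical_value_general B R ℓ hR hℓ
end

section
/- Let B, R > 0 and ℓ > 2R, and set x₂* = −i·√(ℓ²/4 − R²). Then for every real x₁ ∈ (−ℓ/2, ℓ/2) the value s₀(x₁, x₂*) is real, and x₁ = 0 is the unique global minimum of the function x₁ ↦ s₀(x₁, x₂*) on (−ℓ/2, ℓ/2): for all real x₁ ∈ (−ℓ/2, ℓ/2) with x₁ ≠ 0 one has Re s₀(x₁, x₂*) > Re s₀(0, x₂*). -/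
noncomputable def F0 (B R ℓ c x₁ : ℝ) : ℝ :=
  B/4*(x₁+ℓ/2)^2 + B/4*(x₁-ℓ/2)^2 - B/2*c^2 - B*R^2/2 + B*ℓ/2*c
    - B*R^2/2*Real.log ((ℓ/2+x₁+c)/R) - B*R^2/2*Real.log ((ℓ/2-x₁+c)/R)

lemma s0_eval (B R ℓ c x₁ : ℝ) (hR : 0 < R) (h1 : 0 < ℓ/2 + x₁ + c) (h2 : 0 < ℓ/2 - x₁ + c) :
    s0 B R ℓ (x₁ : ℂ) (-(Complex.I * (c : ℂ))) = ((F0 B R ℓ c x₁ : ℝ) : ℂ) := by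
  have hIc : Complex.I * (-(Complex.I * (c:ℂ))) = (c:ℂ) := by
    rw [mul_neg, ← mul_assoc, Complex.I_mul_I]; ring
  have hsq : (-(Complex.I * (c:ℂ)))^2 = -((c:ℂ)^2) := by
    rw [neg_pow, mul_pow, Complex.I_sq]; ring
  have ha1 : ((ℓ:ℂ)/2 + (x₁:ℂ) + Complex.I * (-(Complex.I * (c:ℂ))))/(R:ℂ)
      = (((ℓ/2 + x₁ + c)/R : ℝ) : ℂ) := by rw [hIc]; push_cast; ring
  have ha2 : ((ℓ:ℂ)/2 - (x₁:ℂ) + Complex.I * (-(Complex.I * (c:ℂ))))/(R:ℂ)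
      = (((ℓ/2 - x₁ + c)/R : ℝ) : ℂ) := by rw [hIc]; push_cast; ring
  have hl1 : Complex.log (((ℓ/2 + x₁ + c)/R : ℝ) : ℂ) = ((Real.log ((ℓ/2+x₁+c)/R) : ℝ) : ℂ) :=
    (Complex.ofReal_log (by positivity)).symm
  have hl2 : Complex.log (((ℓ/2 - x₁ + c)/R : ℝ) : ℂ) = ((Real.log ((ℓ/2-x₁+c)/R) : ℝ) : ℂ) :=
    (Complex.ofReal_log (by positivity)).symm
  unfold s0 F0
  rw [ha1, ha2, hl1, hl2, hsq]
  have hterm : Complex.I * ((B:ℂ)*(ℓ:ℂ)/2) * (-(Complex.I*(c:ℂ))) = ((B*ℓ/2*c : ℝ) : ℂ) := by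
    rw [show Complex.I * ((B:ℂ)*(ℓ:ℂ)/2) * (-(Complex.I*(c:ℂ)))
        = -(Complex.I*Complex.I)*((B:ℂ)*(ℓ:ℂ)/2*(c:ℂ)) from by ring, Complex.I_mul_I]
    push_cast; ring
  rw [hterm]
  push_cast
  ring

/-- for real `x₁ ∈ (−ℓ/2, ℓ/2)`, the value `s₀(x₁, x₂*)` is real, and
`x₁ = 0` is the unique global minimum of `x₁ ↦ s₀(x₁, x₂*)` on `(−ℓ/2, ℓ/2)`. -/
theorem s0_real_on_axis_min (B R ℓ : ℝ) (hB : 0 < B) (hR : 0 < R) (hℓ : 2 * R < ℓ) :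
    (∀ x₁ : ℝ, x₁ ∈ Set.Ioo (-(ℓ / 2)) (ℓ / 2) →
      (s0 B R ℓ (x₁ : ℂ) (-(Complex.I * (Real.sqrt (ℓ ^ 2 / 4 - R ^ 2) : ℂ)))).im = 0) ∧
    (∀ x₁ : ℝ, x₁ ∈ Set.Ioo (-(ℓ / 2)) (ℓ / 2) → x₁ ≠ 0 →
      (s0 B R ℓ 0 (-(Complex.I * (Real.sqrt (ℓ ^ 2 / 4 - R ^ 2) : ℂ)))).re
        < (s0 B R ℓ (x₁ : ℂ) (-(Complex.I * (Real.sqrt (ℓ ^ 2 / 4 - R ^ 2) : ℂ)))).re) := by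
  set c := Real.sqrt (ℓ ^ 2 / 4 - R ^ 2) with hcdef
  have hpos : 0 < ℓ ^ 2 / 4 - R ^ 2 := by nlinarith
  have hc0 : 0 < c := Real.sqrt_pos.2 hpos
  have hcsq : c ^ 2 = ℓ ^ 2 / 4 - R ^ 2 := Real.sq_sqrt hpos.le
  have key : ∀ x₁ : ℝ, x₁ ∈ Set.Ioo (-(ℓ / 2)) (ℓ / 2) →
      s0 B R ℓ (x₁ : ℂ) (-(Complex.I * (c : ℂ))) = ((F0 B R ℓ c x₁ : ℝ) : ℂ) := by
    intro x₁ hx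
    obtain ⟨hx1, hx2⟩ := hx
    exact s0_eval B R ℓ c x₁ hR (by linarith) (by linarith)
  have h0mem : (0:ℝ) ∈ Set.Ioo (-(ℓ / 2)) (ℓ / 2) := by constructor <;> nlinarith
  constructor
  · intro x₁ hx
    rw [key x₁ hx]; simp
  · intro x₁ hx hne
    have hkey0 : s0 B R ℓ 0 (-(Complex.I * (c : ℂ))) = ((F0 B R ℓ c 0 : ℝ) : ℂ) := by
      have := key 0 h0mem
      simpa using this
    rw [hkey0, key x₁ hx, Complex.ofReal_re, Complex.ofReal_re]
    obtain ⟨hx1, hx2⟩ := hx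
    -- main inequality
    set a := ℓ/2 + c with hadef
    have h1 : 0 < a + x₁ := by simp only [hadef]; linarith
    have h2 : 0 < a - x₁ := by simp only [hadef]; linarith
    have hx2pos : 0 < x₁ ^ 2 := by positivity
    have hlog : Real.log ((a+x₁)/R) + Real.log ((a-x₁)/R) < 2 * Real.log (a/R) := by
      rw [← Real.log_mul (by positivity) (by positivity)]
      have : 2 * Real.log (a/R) = Real.log ((a/R)^2) := by
        rw [Real.log_pow]; push_cast; ring
      rw [this]
      apply Real.log_lt_log (by positivity)
      rw [div_mul_div_comm, div_pow, div_lt_div_iff₀ (by positivity) (by positivity)]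
      nlinarith [mul_pos hx2pos (mul_pos hR hR)]
    unfold F0
    have e1 : ℓ/2 + x₁ + c = a + x₁ := by rw [hadef]; ring
    have e2 : ℓ/2 - x₁ + c = a - x₁ := by rw [hadef]; ring
    have e3 : ℓ/2 + 0 + c = a := by rw [hadef]; ring
    have e4 : ℓ/2 - 0 + c = a := by rw [hadef]; ring
    rw [e1, e2, e3, e4]
    have hR2 : 0 < B * R^2 / 2 := by positivity
    nlinarith [mul_lt_mul_of_pos_left hlog hR2]
end

section
/- Let B, R > 0, Θ₀ > 0, δ₀ ∈ (0,1), r > R, and C₀, h₀ > 0. Suppose m, δ : (0, h₀) → ℝ satisfy |m(h) − BR²/(2h) − √(Θ₀·B·R²/h)| ≤ C₀ and |δ(h) − δ₀| ≤ C₀·√h for all h ∈ (0, h₀), and that δ(h) > 0. Then lim_{h→0⁺} (BR²/h)^{δ₀} · ∫₀^∞ exp(−B r² s/(2h)) · (1+s)^{m(h)−δ(h)} · s^{δ(h)−1} ds = Γ(δ₀) · (2R²/(r² − R²))^{δ₀}, where Γ is the Gamma function. -/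
/-!
With `λ = B r² / (2h)`, the substitution `u = λ s` turns the integral into
`λ^{-δ} ∫₀^∞ e^{-u} (1 + u/λ)^{m-δ} u^{δ-1} du`. Since `(m - δ)/λ → θ = R²/r² < 1`, the factor
`(1 + u/λ)^{m-δ}` tends to `e^{θu}` and is dominated by `e^{κu}` for a fixed `κ ∈ (θ, 1)`, so by
dominated convergence the integral tends to `∫₀^∞ e^{-(1-θ)u} u^{δ₀-1} du = Γ(δ₀)(1-θ)^{-δ₀}`.
The prefactor `(BR²/h)^{δ₀} λ^{-δ}` is `(2R²/r²)^{δ₀} λ^{δ₀-δ}`, and `λ^{δ₀-δ} → 1` because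
`δ - δ₀ = O(√h)` while `log λ = O(log h)`.
-/

open MeasureTheory Real Set Filter Topology Asymptotics

lemma integral_exp_neg_mul_one_add_rpow_mul_rpow {c : ℝ} (hc : 0 < c) (p q : ℝ) :
    ∫ s in Ioi (0 : ℝ), exp (-(c * s)) * (1 + s) ^ p * s ^ (q - 1) =
      c ^ (-q) * ∫ u in Ioi (0 : ℝ), exp (-u) * (1 + u / c) ^ p * u ^ (q - 1) := by
  have h := integral_comp_mul_left_Ioi (fun u => exp (-u) * (1 + u / c) ^ p * u ^ (q - 1)) 0 hc
  have hscale : ∫ s in Ioi (0 : ℝ), exp (-(c * s)) * (1 + c * s / c) ^ p * (c * s) ^ (q - 1) =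
      c ^ (q - 1) * ∫ s in Ioi (0 : ℝ), exp (-(c * s)) * (1 + s) ^ p * s ^ (q - 1) := by
    rw [← integral_const_mul]
    refine setIntegral_congr_fun measurableSet_Ioi fun s hs => ?_
    rw [mul_div_cancel_left₀ _ hc.ne', mul_rpow hc.le (le_of_lt hs)]
    ring
  rw [hscale, mul_zero, smul_eq_mul, rpow_sub_one hc.ne', div_mul_eq_mul_div, div_eq_inv_mul] at h
  rw [rpow_neg hc.le, eq_inv_mul_iff_mul_eq₀ (rpow_pos_of_pos hc q).ne']
  exact mul_left_cancel₀ (inv_ne_zero hc.ne') h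

lemma one_add_rpow_le_exp_mul {x p κ : ℝ} (hx : 0 ≤ x) (hκ : 0 ≤ κ) (hp : p ≤ κ) :
    (1 + x) ^ p ≤ exp (κ * x) :=
  calc (1 + x) ^ p ≤ (1 + x) ^ κ := rpow_le_rpow_of_exponent_le (by linarith) hp
    _ ≤ exp x ^ κ := rpow_le_rpow (by linarith) (by linarith [add_one_le_exp x]) hκ
    _ = exp (κ * x) := by rw [← exp_mul, mul_comm]

lemma rpow_le_rpow_add_rpow {u a b q : ℝ} (hu : 0 < u) (ha : a ≤ q) (hb : q ≤ b) :
    u ^ q ≤ u ^ a + u ^ b := by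
  rcases le_total u 1 with hu1 | hu1
  · linarith [rpow_le_rpow_of_exponent_ge hu hu1 ha, rpow_nonneg hu.le b]
  · linarith [rpow_le_rpow_of_exponent_le hu1 hb, rpow_nonneg hu.le a]

lemma exp_neg_mul_one_add_div_rpow_mul_rpow_le {c p q a b κ u : ℝ} (hc : 0 < c) (hκ : 0 ≤ κ)
    (hp : p ≤ κ * c) (ha : a ≤ q - 1) (hb : q - 1 ≤ b) (hu : 0 < u) :
    exp (-u) * (1 + u / c) ^ p * u ^ (q - 1) ≤
      u ^ a * exp (-(1 - κ) * u) + u ^ b * exp (-(1 - κ) * u) := by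
  have hbase : (1 + u / c) ^ p ≤ exp (κ * u) := by
    have h := one_add_rpow_le_exp_mul (div_pos hu hc).le (mul_nonneg hκ hc.le) hp
    rwa [mul_assoc, mul_div_cancel₀ _ hc.ne'] at h
  calc exp (-u) * (1 + u / c) ^ p * u ^ (q - 1)
      ≤ exp (-u) * exp (κ * u) * (u ^ a + u ^ b) := by
        gcongr
        exact rpow_le_rpow_add_rpow hu ha hb
    _ = _ := by rw [← exp_add]; ring_nf

section Laplace

variable {ι : Type*} {l : Filter ι} {lam p q : ι → ℝ} {θ q₀ : ℝ}

lemma tendsto_one_add_div_rpow (hlam : Tendsto lam l atTop)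
    (hp : Tendsto (fun i => p i / lam i) l (𝓝 θ)) (u : ℝ) :
    Tendsto (fun i => (1 + u / lam i) ^ p i) l (𝓝 (exp (θ * u))) := by
  have h := ((tendsto_one_add_div_rpow_exp u).comp hlam).rpow hp (Or.inl (exp_pos u).ne')
  rw [← exp_mul, mul_comm] at h
  refine h.congr' ?_
  have hbase : ∀ᶠ i in l, -1 < u / lam i :=
    (tendsto_const_nhds.div_atTop hlam).eventually_const_lt (by norm_num)
  filter_upwards [hbase, hlam.eventually_gt_atTop 0] with i hi hlam0
  rw [Function.comp_apply, ← rpow_mul (by linarith), mul_div_cancel₀ _ hlam0.ne']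

lemma tendsto_integral_exp_neg_mul_one_add_div_rpow_mul_rpow [l.IsCountablyGenerated]
    (hlam : Tendsto lam l atTop) (hp : Tendsto (fun i => p i / lam i) l (𝓝 θ)) (hθ : θ < 1)
    (hq : Tendsto q l (𝓝 q₀)) (hq₀ : 0 < q₀) :
    Tendsto (fun i => ∫ u in Ioi (0 : ℝ), exp (-u) * (1 + u / lam i) ^ p i * u ^ (q i - 1)) l
      (𝓝 (Gamma q₀ * (1 - θ) ^ (-q₀))) := by
  have h1θ : 0 < 1 - θ := sub_pos.2 hθ
  have hlim : ∫ u in Ioi (0 : ℝ), exp (-u) * exp (θ * u) * u ^ (q₀ - 1) =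
      Gamma q₀ * (1 - θ) ^ (-q₀) := by
    rw [rpow_neg h1θ.le, ← inv_rpow h1θ.le, ← one_div, mul_comm,
      ← integral_rpow_mul_exp_neg_mul_Ioi hq₀ h1θ]
    refine setIntegral_congr_fun measurableSet_Ioi fun u _ => ?_
    rw [← exp_add, mul_comm]
    ring_nf
  obtain ⟨κ, hθκ, hκ0, hκ1⟩ : ∃ κ, θ < κ ∧ 0 ≤ κ ∧ 0 < 1 - κ := by
    obtain ⟨κ, hκ, hκ1⟩ := exists_between (max_lt hθ one_pos)
    exact ⟨κ, (le_max_left θ 0).trans_lt hκ, (le_max_right θ 0).trans hκ.le, sub_pos.2 hκ1⟩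
  rw [← hlim]
  refine tendsto_integral_filter_of_dominated_convergence
    (fun u => u ^ (q₀ / 2 - 1) * exp (-(1 - κ) * u) + u ^ q₀ * exp (-(1 - κ) * u))
    (Eventually.of_forall fun i => Measurable.aestronglyMeasurable (by fun_prop)) ?_ ?_ ?_
  · filter_upwards [hlam.eventually_gt_atTop 0, hp.eventually_lt_const hθκ,
      hq.eventually_const_le (half_lt_self hq₀), hq.eventually_le_const (lt_add_one q₀)]
      with i hlam0 hpκ hqa hqb
    filter_upwards [ae_restrict_mem measurableSet_Ioi] with u (hu : 0 < u)
    rw [norm_of_nonneg (by positivity)]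
    exact exp_neg_mul_one_add_div_rpow_mul_rpow_le hlam0 hκ0 ((div_lt_iff₀ hlam0).1 hpκ).le
      (by linarith) (by linarith) hu
  · have h := (integrableOn_rpow_mul_exp_neg_mul_rpow (s := q₀ / 2 - 1) (by linarith) one_pos
      hκ1).add (integrableOn_rpow_mul_exp_neg_mul_rpow (s := q₀) (by linarith) one_pos hκ1)
    simp only [rpow_one] at h
    exact h
  · filter_upwards [ae_restrict_mem measurableSet_Ioi] with u (hu : 0 < u)
    exact (tendsto_const_nhds.mul (tendsto_one_add_div_rpow hlam hp u)).mul
      (tendsto_const_nhds.rpow (hq.sub_const 1) (Or.inl hu.ne'))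

theorem tendsto_rpow_mul_integral_exp_neg_mul_one_add_rpow_mul_rpow [l.IsCountablyGenerated]
    (hlam : Tendsto lam l atTop) (hp : Tendsto (fun i => p i / lam i) l (𝓝 θ)) (hθ : θ < 1)
    (hq : Tendsto q l (𝓝 q₀)) (hq₀ : 0 < q₀)
    (hlog : Tendsto (fun i => (q i - q₀) * log (lam i)) l (𝓝 0)) :
    Tendsto (fun i => lam i ^ q₀ *
        ∫ s in Ioi (0 : ℝ), exp (-(lam i * s)) * (1 + s) ^ p i * s ^ (q i - 1)) l
      (𝓝 (Gamma q₀ * (1 - θ) ^ (-q₀))) := by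
  have hfac : Tendsto (fun i => lam i ^ (q₀ - q i)) l (𝓝 1) := by
    have h := hlog.neg.rexp
    rw [neg_zero, exp_zero] at h
    refine h.congr' ?_
    filter_upwards [hlam.eventually_gt_atTop 0] with i hi
    rw [rpow_def_of_pos hi]
    ring_nf
  have h := hfac.mul (tendsto_integral_exp_neg_mul_one_add_div_rpow_mul_rpow hlam hp hθ hq hq₀)
  rw [one_mul] at h
  refine h.congr' ?_
  filter_upwards [hlam.eventually_gt_atTop 0] with i hi
  rw [integral_exp_neg_mul_one_add_rpow_mul_rpow hi, ← mul_assoc, ← rpow_add hi,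
    ← sub_eq_add_neg]

end Laplace

lemma tendsto_sqrt_nhdsGT_zero : Tendsto (fun h : ℝ => √h) (𝓝[>] 0) (𝓝 0) :=
  (continuous_sqrt.tendsto' 0 0 sqrt_zero).mono_left nhdsWithin_le_nhds

lemma tendsto_sqrt_mul_log_div_nhdsGT_zero {c : ℝ} (hc : c ≠ 0) :
    Tendsto (fun h : ℝ => √h * log (c / h)) (𝓝[>] 0) (𝓝 0) := by
  have h := (tendsto_sqrt_nhdsGT_zero.mul_const (log c)).sub
    (tendsto_log_mul_rpow_nhdsGT_zero one_half_pos)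
  rw [zero_mul, sub_zero] at h
  refine h.congr' ?_
  filter_upwards [self_mem_nhdsWithin] with h (hh : 0 < h)
  rw [log_div hc hh.ne', sqrt_eq_rpow]
  ring

lemma tendsto_mul_of_abs_sub_div_sub_sqrt_div_le {m : ℝ → ℝ} {a b C : ℝ}
    (hm : ∀ᶠ h in 𝓝[>] 0, |m h - a / h - √(b / h)| ≤ C) :
    Tendsto (fun h => h * m h) (𝓝[>] 0) (𝓝 a) := by
  have hO : (fun h => h * (m h - a / h - √(b / h))) =O[𝓝[>] 0] fun h => h := by
    refine IsBigO.of_bound C ?_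
    filter_upwards [hm, self_mem_nhdsWithin] with h hmh (hh : 0 < h)
    rw [norm_mul, Real.norm_eq_abs, Real.norm_eq_abs, abs_of_pos hh, mul_comm C]
    exact mul_le_mul_of_nonneg_left hmh hh.le
  have h := ((hO.trans_tendsto (tendsto_id.mono_left nhdsWithin_le_nhds)).add_const a).add
    (tendsto_sqrt_nhdsGT_zero.const_mul √b)
  rw [zero_add, mul_zero, add_zero] at h
  refine h.congr' ?_
  filter_upwards [self_mem_nhdsWithin] with h (hh : 0 < h)
  have hsqrt : h * (√b / √h) = √b * √h := by rw [mul_div_left_comm, div_sqrt]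
  rw [sqrt_div' b hh.le, mul_sub, mul_sub, mul_div_cancel₀ _ hh.ne', hsqrt]
  ring

lemma tendsto_sub_div_div_of_abs_sub_div_sub_sqrt_div_le {m δ : ℝ → ℝ} {a b C d : ℝ} (c : ℝ)
    (hm : ∀ᶠ h in 𝓝[>] 0, |m h - a / h - √(b / h)| ≤ C) (hδ : Tendsto δ (𝓝[>] 0) (𝓝 d)) :
    Tendsto (fun h => (m h - δ h) / (c / h)) (𝓝[>] 0) (𝓝 (a / c)) := by
  have h := ((tendsto_mul_of_abs_sub_div_sub_sqrt_div_le hm).sub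
    ((tendsto_id.mono_left nhdsWithin_le_nhds).mul hδ)).div_const c
  rw [zero_mul, sub_zero] at h
  exact h.congr fun h => by simp only [id, div_div_eq_mul_div]; ring

lemma div_rpow_mul_one_sub_div_rpow_neg {a b c : ℝ} (s : ℝ) (ha : 0 ≤ a) (hc : 0 < c)
    (hbc : b < c) : (a / c) ^ s * (1 - b / c) ^ (-s) = (a / (c - b)) ^ s := by
  have hcb : 0 < c - b := sub_pos.2 hbc
  rw [one_sub_div hc.ne', rpow_neg (div_pos hcb hc).le, ← inv_rpow (div_pos hcb hc).le, inv_div,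
    ← mul_rpow (div_nonneg ha hc.le) (div_pos hc hcb).le]
  congr 1
  field_simp

theorem laplace_asymptotics_away_general (B R Θ₀ δ₀ r C₀ h₀ : ℝ) (hB : 0 < B) (hR : 0 < R)
    (hδ₀ : δ₀ ∈ Set.Ioo (0 : ℝ) 1) (hr : R < r) (hh₀ : 0 < h₀)
    (m δ : ℝ → ℝ)
    (hm : ∀ h ∈ Set.Ioo (0 : ℝ) h₀,
      |m h - B * R ^ 2 / (2 * h) - Real.sqrt (Θ₀ * B * R ^ 2 / h)| ≤ C₀)
    (hδ : ∀ h ∈ Set.Ioo (0 : ℝ) h₀, |δ h - δ₀| ≤ C₀ * Real.sqrt h) :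
    Filter.Tendsto
      (fun h : ℝ => (B * R ^ 2 / h) ^ δ₀ *
        ∫ s in Set.Ioi (0 : ℝ),
          Real.exp (-(B * r ^ 2 * s / (2 * h))) * (1 + s) ^ (m h - δ h) * s ^ (δ h - 1))
      (nhdsWithin 0 (Set.Ioi 0))
      (nhds (Real.Gamma δ₀ * (2 * R ^ 2 / (r ^ 2 - R ^ 2)) ^ δ₀)) := by
  set lam : ℝ → ℝ := fun h => B * r ^ 2 / 2 / h
  have hr0 : 0 < r := hR.trans hr
  have hRr : R ^ 2 < r ^ 2 := by nlinarith
  have hIoo : ∀ᶠ h in 𝓝[>] 0, h ∈ Ioo 0 h₀ := Ioo_mem_nhdsGT hh₀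
  have hδO : (fun h => δ h - δ₀) =O[𝓝[>] 0] fun h => √h := by
    refine IsBigO.of_bound C₀ (hIoo.mono fun h hh => ?_)
    simpa only [Real.norm_eq_abs, abs_of_nonneg (sqrt_nonneg h)] using hδ h hh
  have hδlim : Tendsto δ (𝓝[>] 0) (𝓝 δ₀) :=
    tendsto_sub_nhds_zero_iff.1 (hδO.trans_tendsto tendsto_sqrt_nhdsGT_zero)
  have hlam : Tendsto lam (𝓝[>] 0) atTop :=
    (tendsto_inv_nhdsGT_zero.const_mul_atTop (by positivity)).congr fun h =>
      (div_eq_mul_inv _ _).symm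
  have hp : Tendsto (fun h => (m h - δ h) / lam h) (𝓝[>] 0) (𝓝 (R ^ 2 / r ^ 2)) := by
    have h := tendsto_sub_div_div_of_abs_sub_div_sub_sqrt_div_le (a := B * R ^ 2 / 2)
      (b := Θ₀ * B * R ^ 2) (B * r ^ 2 / 2) (hIoo.mono fun h hh => by simpa only [div_div] using hm h hh) hδlim
    rwa [show B * R ^ 2 / 2 / (B * r ^ 2 / 2) = R ^ 2 / r ^ 2 by field_simp] at h
  have hlog : Tendsto (fun h => (δ h - δ₀) * log (lam h)) (𝓝[>] 0) (𝓝 0) :=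
    (hδO.mul (isBigO_refl (fun h => log (lam h)) _)).trans_tendsto
      (tendsto_sqrt_mul_log_div_nhdsGT_zero (by positivity))
  have h := (tendsto_rpow_mul_integral_exp_neg_mul_one_add_rpow_mul_rpow hlam hp
    ((div_lt_one (by positivity)).2 hRr) hδlim hδ₀.1 hlog).const_mul ((2 * R ^ 2 / r ^ 2) ^ δ₀)
  rw [mul_left_comm,
    div_rpow_mul_one_sub_div_rpow_neg δ₀ (by positivity) (by positivity) hRr] at h
  refine h.congr' ?_
  filter_upwards [self_mem_nhdsWithin] with h (hh : 0 < h)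
  rw [← mul_assoc, ← mul_rpow (by positivity) (by positivity)]
  congr 2
  · simp only [lam]
    field_simp
  · ext s
    congr 3
    ring

/-- under `m(h) = BR²/(2h) + √(Θ₀BR²/h) + O(1)` and `δ(h) = δ₀ + O(√h)`,
`δ(h) > 0`, for fixed `r > R` one has
`(BR²/h)^{δ₀} ∫₀^∞ e^{−Br²s/(2h)} (1+s)^{m(h)−δ(h)} s^{δ(h)−1} ds
  → Γ(δ₀)·(2R²/(r²−R²))^{δ₀}` as `h → 0⁺`. -/
theorem laplace_asymptotics_away (B R Θ₀ δ₀ r C₀ h₀ : ℝ) (hB : 0 < B) (hR : 0 < R)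
    (hΘ : 0 < Θ₀) (hδ₀ : δ₀ ∈ Set.Ioo (0 : ℝ) 1) (hr : R < r) (hC₀ : 0 < C₀) (hh₀ : 0 < h₀)
    (m δ : ℝ → ℝ)
    (hm : ∀ h ∈ Set.Ioo (0 : ℝ) h₀,
      |m h - B * R ^ 2 / (2 * h) - Real.sqrt (Θ₀ * B * R ^ 2 / h)| ≤ C₀)
    (hδ : ∀ h ∈ Set.Ioo (0 : ℝ) h₀, |δ h - δ₀| ≤ C₀ * Real.sqrt h)
    (hδpos : ∀ h ∈ Set.Ioo (0 : ℝ) h₀, 0 < δ h) :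
    Filter.Tendsto
      (fun h : ℝ => (B * R ^ 2 / h) ^ δ₀ *
        ∫ s in Set.Ioi (0 : ℝ),
          Real.exp (-(B * r ^ 2 * s / (2 * h))) * (1 + s) ^ (m h - δ h) * s ^ (δ h - 1))
      (nhdsWithin 0 (Set.Ioi 0))
      (nhds (Real.Gamma δ₀ * (2 * R ^ 2 / (r ^ 2 - R ^ 2)) ^ δ₀)) :=
  laplace_asymptotics_away_general B R Θ₀ δ₀ r C₀ h₀ hB hR hδ₀ hr hh₀ m δ hm hδ
end
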